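/- arXiv:2203.10600 — 5 statements merged into one kernel-verified Lean document; each statement's English description precedes it below -/
import Mathlib

section
/- Let λ > 0 and τ > 0, and define λ_τ = log(1+τλ)/τ and q_τ = log(1+τλ)/(τλ). Then 0 < λ_τ < λ, 0 < q_τ < 1, and for every α ∈ [0,1] one has 0 ≤ λ − λ_τ ≤ C_α τ^α λ^{1+α} and 0 ≤ 1 − q_τ ≤ C_α τ^α λ^α, where C_α = sup_{z>0} z^{-α}|log(1+z)/z − 1| < ∞. -/
open Real Set

private lemma log_pos_lt {z : ℝ} (hz : 0 < z) :
    0 < Real.log (1 + z) ∧ Real.log (1 + z) < z := by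
  constructor
  · exact Real.log_pos (by linarith)
  · have := Real.log_lt_sub_one_of_pos (by linarith : (0:ℝ) < 1 + z) (by linarith)
    linarith

private lemma ratio_lb {z : ℝ} (hz : 0 < z) :
    1 - Real.log (1 + z) / z ≤ z / (1 + z) := by
  have h1z : (0:ℝ) < 1 + z := by linarith
  have h := Real.one_sub_inv_le_log_of_pos h1z
  have hinv : 1 - (1 + z)⁻¹ = z / (1 + z) := by field_simp; ring
  rw [hinv, div_le_iff₀ h1z] at h
  have h3 : (1:ℝ)/(1+z) ≤ Real.log (1 + z)/z := by
    rw [div_le_div_iff₀ h1z hz]; nlinarith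
  have h4 : (1:ℝ)/(1+z) = (1+z)⁻¹ := one_div _
  linarith

private lemma f_le_one {z α : ℝ} (hz : 0 < z) (hα0 : 0 ≤ α) (hα1 : α ≤ 1) :
    z ^ (-α) * |Real.log (1 + z) / z - 1| ≤ 1 := by
  obtain ⟨hl0, hlz⟩ := log_pos_lt hz
  have hq1 : Real.log (1 + z) / z < 1 := (div_lt_one hz).2 hlz
  have habs : |Real.log (1 + z) / z - 1| = 1 - Real.log (1 + z) / z := by
    rw [abs_of_nonpos (by linarith)]; ring
  rw [habs]
  have hg1 : 1 - Real.log (1 + z) / z ≤ 1 := by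
    have : 0 < Real.log (1 + z) / z := div_pos hl0 hz
    linarith
  have hgz : 1 - Real.log (1 + z) / z ≤ z := by
    have := ratio_lb hz
    have h2 : z / (1 + z) ≤ z := by
      rw [div_le_iff₀ (by linarith : (0:ℝ) < 1 + z)]
      nlinarith
    linarith
  rcases le_total z 1 with hz1 | hz1
  · calc z ^ (-α) * (1 - Real.log (1 + z) / z) ≤ z ^ (-α) * z := by
          apply mul_le_mul_of_nonneg_left hgz (Real.rpow_nonneg hz.le _)
      _ = z ^ (1 - α) := by
          nth_rewrite 2 [← Real.rpow_one z]
          rw [← Real.rpow_add hz, show -α + 1 = 1 - α by ring]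
      _ ≤ 1 := Real.rpow_le_one hz.le hz1 (by linarith)
  · calc z ^ (-α) * (1 - Real.log (1 + z) / z) ≤ 1 * 1 := by
          apply mul_le_mul _ hg1 (by linarith) zero_le_one
          exact Real.rpow_le_one_of_one_le_of_nonpos hz1 (by linarith)
      _ = 1 := by norm_num

/-- For `λ, τ > 0`, with `λ_τ = log(1+τλ)/τ` and `q_τ = log(1+τλ)/(τλ)`, one has
`0 < λ_τ < λ`, `0 < q_τ < 1`, and for every `α ∈ [0,1]`, with
`C_α = sup_{z>0} z^{-α}|log(1+z)/z − 1| < ∞`, one has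
`0 ≤ λ − λ_τ ≤ C_α τ^α λ^{1+α}` and `0 ≤ 1 − q_τ ≤ C_α τ^α λ^α`. -/
theorem stmt1 (lam τ : ℝ) (hlam : 0 < lam) (hτ : 0 < τ) :
    (0 < Real.log (1 + τ * lam) / τ ∧ Real.log (1 + τ * lam) / τ < lam) ∧
    (0 < Real.log (1 + τ * lam) / (τ * lam) ∧
      Real.log (1 + τ * lam) / (τ * lam) < 1) ∧
    ∀ α ∈ Set.Icc (0:ℝ) 1,
      BddAbove ((fun z : ℝ => z ^ (-α) * |Real.log (1 + z) / z - 1|) '' Set.Ioi 0) ∧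
      (let C := sSup ((fun z : ℝ => z ^ (-α) * |Real.log (1 + z) / z - 1|) '' Set.Ioi 0);
        (0 ≤ lam - Real.log (1 + τ * lam) / τ ∧
          lam - Real.log (1 + τ * lam) / τ ≤ C * τ ^ α * lam ^ (1 + α)) ∧
        (0 ≤ 1 - Real.log (1 + τ * lam) / (τ * lam) ∧
          1 - Real.log (1 + τ * lam) / (τ * lam) ≤ C * τ ^ α * lam ^ α)) := by
  have hz0 : 0 < τ * lam := mul_pos hτ hlam
  obtain ⟨hl0, hlz⟩ := log_pos_lt hz0
  refine ⟨⟨div_pos hl0 hτ, ?_⟩, ⟨div_pos hl0 hz0, ?_⟩, ?_⟩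
  · rw [div_lt_iff₀ hτ]; exact lt_of_lt_of_eq hlz (mul_comm τ lam)
  · exact (div_lt_one hz0).2 hlz
  rintro α ⟨hα0, hα1⟩
  have hbdd : BddAbove
      ((fun z : ℝ => z ^ (-α) * |Real.log (1 + z) / z - 1|) '' Set.Ioi 0) := by
    refine ⟨1, ?_⟩
    rintro _ ⟨z, hz, rfl⟩
    exact f_le_one hz hα0 hα1
  refine ⟨hbdd, ?_⟩
  intro C
  have hC : (τ * lam) ^ (-α) * |Real.log (1 + τ * lam) / (τ * lam) - 1| ≤ C :=
    le_csSup hbdd ⟨τ * lam, Set.mem_Ioi.2 hz0, rfl⟩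
  have hq1 : Real.log (1 + τ * lam) / (τ * lam) < 1 := (div_lt_one hz0).2 hlz
  have habs : |Real.log (1 + τ * lam) / (τ * lam) - 1|
      = 1 - Real.log (1 + τ * lam) / (τ * lam) := by
    rw [abs_of_nonpos (by linarith)]; ring
  rw [habs] at hC
  have hpow : (0:ℝ) < (τ * lam) ^ α := Real.rpow_pos_of_pos hz0 _
  have hkey : 1 - Real.log (1 + τ * lam) / (τ * lam) ≤ C * (τ * lam) ^ α := by
    calc 1 - Real.log (1 + τ * lam) / (τ * lam)
        = (τ * lam) ^ α * ((τ * lam) ^ (-α)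
            * (1 - Real.log (1 + τ * lam) / (τ * lam))) := by
          rw [Real.rpow_neg hz0.le]; field_simp
      _ ≤ (τ * lam) ^ α * C := mul_le_mul_of_nonneg_left hC hpow.le
      _ = C * (τ * lam) ^ α := mul_comm _ _
  have hsplit : (τ * lam) ^ α = τ ^ α * lam ^ α := Real.mul_rpow hτ.le hlam.le
  rw [hsplit] at hkey
  have hq0 : 0 ≤ 1 - Real.log (1 + τ * lam) / (τ * lam) := by linarith
  have hlt : Real.log (1 + τ * lam) / τ < lam := by
    rw [div_lt_iff₀ hτ]; exact lt_of_lt_of_eq hlz (mul_comm τ lam)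
  have heq : lam - Real.log (1 + τ * lam) / τ
      = lam * (1 - Real.log (1 + τ * lam) / (τ * lam)) := by
    field_simp
  refine ⟨⟨by linarith, ?_⟩, ⟨hq0, by linarith [hkey]⟩⟩
  rw [heq, Real.rpow_add hlam, Real.rpow_one]
  calc lam * (1 - Real.log (1 + τ * lam) / (τ * lam))
      ≤ lam * (C * (τ ^ α * lam ^ α)) := by
        apply mul_le_mul_of_nonneg_left _ hlam.le
        linarith [hkey]
    _ = C * τ ^ α * (lam * lam ^ α) := by ring
end

section
/- Let (λ_j)_{j∈ℕ} be a nondecreasing sequence of positive reals with λ_j ~ c j² as j → ∞ for some c > 0. Then for every κ ∈ (0,1/2) and every τ > 0, one has ∑_{j∈ℕ} log(1+τλ_j)/(τλ_j) ≤ C_κ τ^{-1/2-κ}, where C_κ depends only on κ and the sequence (λ_j). -/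
/-!
Concavity gives `log (1 + x) ≤ x ^ α / α` for `0 < α ≤ 1`, so with `s = 1/2 + κ` and
`α = 1 - s` every summand is at most `τ ^ (-s) λ_j ^ (-s) / (1 - s)`. Since `λ_j ≳ j²`,
the series `∑ λ_j ^ (-s)` converges because `2 s > 1`.
-/

open Real Set Filter

lemma Real.log_one_add_le_rpow_div {α x : ℝ} (hα : 0 < α) (hα1 : α ≤ 1) (hx : 0 ≤ x) :
    log (1 + x) ≤ x ^ α / α := by
  have h1x : 0 < 1 + x := by linarith
  have hpow : (1 + x) ^ α ≤ 1 + x ^ α := by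
    simpa using Real.rpow_add_le_add_rpow zero_le_one hx hα.le hα1
  have hlog : α * log (1 + x) ≤ x ^ α := by
    rw [← Real.log_rpow h1x]
    linarith [log_le_sub_one_of_pos (rpow_pos_of_pos h1x α)]
  rw [le_div_iff₀ hα]
  linarith

lemma Real.log_one_add_div_le_rpow_neg {s x : ℝ} (hs0 : 0 ≤ s) (hs1 : s < 1) (hx : 0 < x) :
    log (1 + x) / x ≤ x ^ (-s) / (1 - s) := by
  calc log (1 + x) / x ≤ x ^ (1 - s) / (1 - s) / x := by
        gcongr
        exact log_one_add_le_rpow_div (by linarith) (by linarith) hx.le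
    _ = x ^ (-s) / (1 - s) := by
        rw [div_right_comm, ← rpow_sub_one hx.ne', sub_sub_cancel_left]

lemma summable_rpow_neg_of_tendsto_div_pow {lam : ℕ → ℝ} {c s : ℝ} {p : ℕ} (hc : 0 < c)
    (hasymp : Tendsto (fun j : ℕ => lam j / (j : ℝ) ^ p) atTop (nhds c)) (hs : 0 ≤ s)
    (hps : 1 < p * s) :
    Summable (fun j => lam j ^ (-s)) := by
  have hlower : ∀ᶠ j : ℕ in atTop, c / 2 ≤ lam j / (j : ℝ) ^ p :=
    hasymp.eventually (eventually_ge_nhds (by linarith))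
  refine .of_norm_bounded_eventually_nat
    ((summable_nat_rpow.mpr (neg_lt_neg hps)).mul_left ((c / 2) ^ (-s))) ?_
  filter_upwards [hlower, eventually_gt_atTop 0] with j hj hj0
  have hjpos : (0 : ℝ) < j := by exact_mod_cast hj0
  have hlam : c / 2 * (j : ℝ) ^ p ≤ lam j := (le_div_iff₀ (by positivity)).mp hj
  have hlam0 : 0 < lam j := lt_of_lt_of_le (by positivity) hlam
  calc ‖lam j ^ (-s)‖ = lam j ^ (-s) := Real.norm_of_nonneg (by positivity)
    _ ≤ (c / 2 * (j : ℝ) ^ p) ^ (-s) := rpow_le_rpow_of_nonpos (by positivity) hlam (by linarith)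
    _ = (c / 2) ^ (-s) * (j : ℝ) ^ (-(p * s)) := by
        rw [mul_rpow (by positivity) (by positivity), ← rpow_natCast, ← rpow_mul hjpos.le]
        ring_nf

lemma tsum_log_one_add_div_le {lam : ℕ → ℝ} (hpos : ∀ j, 0 < lam j) {s τ : ℝ} (hs0 : 0 ≤ s)
    (hs1 : s < 1) (hτ : 0 < τ) (hsum : Summable (fun j => lam j ^ (-s))) :
    ∑' j, log (1 + τ * lam j) / (τ * lam j) ≤ τ ^ (-s) / (1 - s) * ∑' j, lam j ^ (-s) := by
  have hbound (j : ℕ) :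
      log (1 + τ * lam j) / (τ * lam j) ≤ τ ^ (-s) / (1 - s) * lam j ^ (-s) := by
    have h := log_one_add_div_le_rpow_neg hs0 hs1 (mul_pos hτ (hpos j))
    rwa [mul_rpow hτ.le (hpos j).le, mul_div_right_comm] at h
  have hnonneg (j : ℕ) : 0 ≤ log (1 + τ * lam j) / (τ * lam j) :=
    div_nonneg (log_nonneg (by nlinarith [hpos j])) (mul_pos hτ (hpos j)).le
  have hg : Summable (fun j => τ ^ (-s) / (1 - s) * lam j ^ (-s)) := hsum.mul_left _
  rw [← tsum_mul_left]
  exact Summable.tsum_le_tsum hbound (.of_nonneg_of_le hnonneg hbound hg) hg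
theorem stmt3_general (lam : ℕ → ℝ) (hpos : ∀ j, 0 < lam j)
    (c : ℝ) (hc : 0 < c)
    (hasymp : Filter.Tendsto (fun j : ℕ => lam j / (j : ℝ) ^ 2) Filter.atTop (nhds c)) :
    ∀ κ ∈ Set.Ioo (0:ℝ) (1/2),
      ∃ C : ℝ, 0 < C ∧ ∀ τ : ℝ, 0 < τ →
        (∑' j : ℕ, Real.log (1 + τ * lam j) / (τ * lam j)) ≤
          C * τ ^ (-(1:ℝ)/2 - κ) := by
  rintro κ ⟨hκ0, hκ2⟩
  set s : ℝ := 1 / 2 + κ with hs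
  have hs0 : 0 ≤ s := by positivity
  have hs1 : 0 < 1 - s := by linarith
  have hsum : Summable (fun j => lam j ^ (-s)) :=
    summable_rpow_neg_of_tendsto_div_pow hc hasymp hs0 (by push_cast; linarith [hs])
  set T := ∑' j, lam j ^ (-s)
  have hT : 0 ≤ T := tsum_nonneg fun j => (rpow_pos_of_pos (hpos j) _).le
  refine ⟨(T + 1) / (1 - s), by positivity, fun τ hτ => ?_⟩
  have hexp : -(1:ℝ)/2 - κ = -s := by ring
  calc ∑' j, log (1 + τ * lam j) / (τ * lam j)
      ≤ τ ^ (-s) / (1 - s) * T := tsum_log_one_add_div_le hpos hs0 (by linarith) hτ hsum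
    _ = T / (1 - s) * τ ^ (-s) := by ring
    _ ≤ (T + 1) / (1 - s) * τ ^ (-s) := by gcongr; linarith
    _ = (T + 1) / (1 - s) * τ ^ (-(1:ℝ)/2 - κ) := by rw [hexp]

/-- Let `(λ_j)` be a nondecreasing sequence of positive reals with
`λ_j ~ c j²` as `j → ∞` for some `c > 0`. Then for every `κ ∈ (0,1/2)` there
exists `C_κ` such that for every `τ > 0`,
`∑_j log(1+τλ_j)/(τλ_j) ≤ C_κ τ^{-1/2-κ}`. -/
theorem stmt3 (lam : ℕ → ℝ) (hpos : ∀ j, 0 < lam j) (hmono : Monotone lam)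
    (c : ℝ) (hc : 0 < c)
    (hasymp : Filter.Tendsto (fun j : ℕ => lam j / (j : ℝ) ^ 2) Filter.atTop (nhds c)) :
    ∀ κ ∈ Set.Ioo (0:ℝ) (1/2),
      ∃ C : ℝ, 0 < C ∧ ∀ τ : ℝ, 0 < τ →
        (∑' j : ℕ, Real.log (1 + τ * lam j) / (τ * lam j)) ≤
          C * τ ^ (-(1:ℝ)/2 - κ) :=
  stmt3_general lam hpos c hc hasymp
end

section
/- The quantity sup over n ∈ ℕ and z ∈ (0,∞) of n · |(1+z)^{-n} − e^{-nz}| is finite. -/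
open Real

lemma quad_le_pow' {z : ℝ} (hz : 0 ≤ z) (n : ℕ) (hn : 2 ≤ n) :
    (n.choose 2 : ℝ) * z ^ 2 ≤ (1 + z) ^ n := by
  have h := add_pow z 1 n
  have hmem : 2 ∈ Finset.range (n+1) := by simp; omega
  have h2 := Finset.single_le_sum (f := fun k => z ^ k * (1:ℝ) ^ (n-k) * (n.choose k : ℝ))
    (fun i _ => by positivity) hmem
  simp only [one_pow, mul_one] at h2 h
  rw [add_comm 1 z, h]
  linarith [h2]

lemma pow_sub_pow_le' {a b : ℝ} (hb : 0 ≤ b) (hba : b ≤ a) (n : ℕ) :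
    a ^ n - b ^ n ≤ n * (a - b) * a ^ (n-1) := by
  have ha : 0 ≤ a := hb.trans hba
  have h := geom_sum₂_mul a b n
  rw [← h]
  have hsum : (∑ i ∈ Finset.range n, a ^ i * b ^ (n - 1 - i)) ≤ n * a ^ (n-1) := by
    calc (∑ i ∈ Finset.range n, a ^ i * b ^ (n - 1 - i))
        ≤ ∑ i ∈ Finset.range n, a ^ (n-1) := by
          apply Finset.sum_le_sum
          intro i hi
          simp only [Finset.mem_range] at hi
          calc a ^ i * b ^ (n-1-i) ≤ a ^ i * a ^ (n-1-i) := by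
                apply mul_le_mul_of_nonneg_left (pow_le_pow_left₀ hb hba _) (pow_nonneg ha _)
            _ = a ^ (n-1) := by rw [← pow_add]; congr 1; omega
      _ = n * a ^ (n-1) := by rw [Finset.sum_const, Finset.card_range, nsmul_eq_mul]
  have hab : 0 ≤ a - b := sub_nonneg.2 hba
  calc (∑ i ∈ Finset.range n, a ^ i * b ^ (n - 1 - i)) * (a - b)
      ≤ (n * a ^ (n-1)) * (a - b) := mul_le_mul_of_nonneg_right hsum hab
    _ = n * (a - b) * a ^ (n-1) := by ring

/-- The quantity `sup_{n ∈ ℕ, z ∈ (0,∞)} n · |(1+z)^{-n} − e^{-nz}|` is finite. -/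
theorem stmt4 :
    ∃ C : ℝ, ∀ n : ℕ, ∀ z : ℝ, 0 < z →
      (n : ℝ) * |((1 + z) ^ n)⁻¹ - Real.exp (-(n : ℝ) * z)| ≤ C := by
  use 4
  intro n z hz
  set a : ℝ := (1 + z)⁻¹ with ha_def
  set b : ℝ := Real.exp (-z) with hb_def
  have hp : (0:ℝ) < 1 + z := by linarith
  have ha_pos : 0 < a := inv_pos.2 hp
  have hb_pos : 0 < b := Real.exp_pos _
  have ha1 : a ≤ 1 := by
    rw [ha_def]
    rw [inv_le_one_iff₀]; right; linarith
  have hba : b ≤ a := by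
    rw [hb_def, ha_def, Real.exp_neg]
    exact inv_anti₀ hp (by linarith [Real.add_one_le_exp z])
  have hrw1 : ((1 + z) ^ n)⁻¹ = a ^ n := by rw [ha_def, inv_pow]
  have hrw2 : Real.exp (-(n : ℝ) * z) = b ^ n := by
    rw [hb_def, ← Real.exp_nat_mul]; ring_nf
  rw [hrw1, hrw2]
  have habs : |a ^ n - b ^ n| = a ^ n - b ^ n := by
    rw [abs_of_nonneg]
    exact sub_nonneg.2 (pow_le_pow_left₀ hb_pos.le hba n)
  rw [habs]
  -- bound on a - b : a - b ≤ z^2 / (1+z),  using exp(-z) ≥ 1 - z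
  have hab_ub : a - b ≤ z^2 / (1+z) := by
    have h1 : 1 - z ≤ b := by
      rw [hb_def]; linarith [Real.add_one_le_exp (-z)]
    have h2 : a - (1 - z) = z^2 / (1+z) := by
      rw [ha_def]; field_simp; ring
    linarith
  match n with
  | 0 => simp
  | 1 =>
    have : a ^ 1 - b ^ 1 ≤ 1 := by
      simp only [pow_one]; linarith [hb_pos]
    simpa using by linarith [this]
  | (m+2) =>
    set n := m + 2 with hn_def
    have hn2 : 2 ≤ n := by omega
    have hkey : a ^ n - b ^ n ≤ n * (a - b) * a ^ (n-1) := pow_sub_pow_le' hb_pos.le hba n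
    -- (1+z)^n ≥ choose n 2 * z^2  and choose n 2 ≥ n^2/4
    have hbinom : (n:ℝ)^2 * z^2 / 4 ≤ (1+z)^n := by
      have h6 := quad_le_pow' hz.le n hn2
      have hc : 2 * (n.choose 2) = n * (n-1) := by
        have he : Even ((m+2) * (m+2-1)) := by
          simpa [Nat.mul_comm] using Nat.even_mul_succ_self (m+1)
        simp only [hn_def, Nat.choose_two_right]
        exact Nat.mul_div_cancel' he.two_dvd
      have hnm : (n:ℝ) = (m:ℝ) + 2 := by rw [hn_def]; push_cast; ring
      have hc' : 2 * ((n.choose 2 : ℕ) : ℝ) = (n:ℝ) * ((n:ℝ)-1) := by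
        have h := congrArg (Nat.cast : ℕ → ℝ) hc
        push_cast [hn_def] at h ⊢
        linear_combination h
      have hn2' : (2:ℝ) ≤ (n:ℝ) := by rw [hnm]; linarith [Nat.cast_nonneg (α := ℝ) m]
      have hchoose : (n:ℝ)^2/4 ≤ ((n.choose 2 : ℕ) : ℝ) := by
        nlinarith [mul_nonneg (sub_nonneg.2 hn2') (Nat.cast_nonneg (α := ℝ) n)]
      calc (n:ℝ)^2 * z^2 / 4 = ((n:ℝ)^2/4) * z^2 := by ring
        _ ≤ ((n.choose 2 : ℕ) : ℝ) * z^2 := mul_le_mul_of_nonneg_right hchoose (sq_nonneg z)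
        _ ≤ (1+z)^n := h6
    -- combine
    have hfrac : (n:ℝ) * (a ^ n - b ^ n) ≤ (n:ℝ)^2 * z^2 / (1+z)^n := by
      have h3 : (n:ℝ) * (a ^ n - b ^ n) ≤ (n:ℝ) * ((n:ℝ) * (a - b) * a ^ (n-1)) :=
        mul_le_mul_of_nonneg_left hkey (Nat.cast_nonneg n)
      have h4 : (n:ℝ) * ((n:ℝ) * (a - b) * a ^ (n-1)) ≤
          (n:ℝ) * ((n:ℝ) * (z^2/(1+z)) * a ^ (n-1)) := by
        apply mul_le_mul_of_nonneg_left _ (Nat.cast_nonneg n)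
        apply mul_le_mul_of_nonneg_right _ (pow_nonneg ha_pos.le _)
        exact mul_le_mul_of_nonneg_left hab_ub (Nat.cast_nonneg n)
      have h5 : (n:ℝ) * ((n:ℝ) * (z^2/(1+z)) * a ^ (n-1)) = (n:ℝ)^2 * z^2 / (1+z)^n := by
        have hpowsplit : (1+z)^n = (1+z) * (1+z)^(n-1) := by
          have h21 : m + 2 - 1 = m + 1 := by omega
          simp only [hn_def, h21]; ring
        rw [ha_def, inv_pow, hpowsplit]
        field_simp
      linarith
    have hfin : (n:ℝ)^2 * z^2 / (1+z)^n ≤ 4 := by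
      rw [div_le_iff₀ (by positivity)]
      nlinarith [hbinom]
    linarith
end

section
/- For every β ∈ [0,1/2] there is a constant C_β, independent of z, τ, t, such that z^{β} e^{−t log(1+τz)/τ} ≤ C_β (t−τ)^{−β} for every z > 0, every τ > 0 and every t > τ. -/
open Real Set

/-- Scalar smoothing estimate for the modified semigroup: for every
`β ∈ [0,1/2]` there exists a constant `C_β` such that for all `z > 0`,
`τ > 0` and `t > τ`, one has `z^β e^{−t log(1+τz)/τ} ≤ C_β (t−τ)^{−β}`. -/
theorem stmt7 :
    ∀ β ∈ Set.Icc (0:ℝ) (1/2),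
      ∃ C : ℝ, 0 < C ∧ ∀ z : ℝ, 0 < z → ∀ τ : ℝ, 0 < τ → ∀ t : ℝ, τ < t →
        z ^ β * Real.exp (-t * (Real.log (1 + τ * z) / τ)) ≤ C * (t - τ) ^ (-β) := by
  intro β hβ
  obtain ⟨hβ0, hβ1⟩ := hβ
  refine ⟨1, one_pos, ?_⟩
  intro z hz τ hτ t ht
  have hs : 0 < t - τ := sub_pos.mpr ht
  have h1 : (0:ℝ) < 1 + τ * z := by positivity
  have hexp : Real.exp (-t * (Real.log (1 + τ * z) / τ)) = (1 + τ * z) ^ (-(t/τ)) := by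
    rw [Real.rpow_def_of_pos h1]
    ring_nf
  have hkey : (z * (t - τ)) ^ β ≤ (1 + τ * z) ^ (t/τ) := by
    have hu : (0:ℝ) < z * (t - τ) := by positivity
    have h2 : (z * (t - τ)) ^ β ≤ 1 + z * (t - τ) := by
      rcases le_total (z * (t - τ)) 1 with h | h
      · calc (z * (t - τ)) ^ β ≤ 1 := Real.rpow_le_one hu.le h hβ0
          _ ≤ 1 + z * (t - τ) := by linarith
      · calc (z * (t - τ)) ^ β ≤ (z * (t - τ)) ^ (1:ℝ) :=
            Real.rpow_le_rpow_of_exponent_le h (by linarith)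
          _ = z * (t - τ) := Real.rpow_one _
          _ ≤ 1 + z * (t - τ) := by linarith
    have h3 : 1 + z * (t - τ) ≤ 1 + (t/τ) * (τ * z) := by
      have he : (t/τ) * (τ * z) = t * z := by field_simp
      rw [he]; nlinarith
    have h4 : 1 + (t/τ) * (τ * z) ≤ (1 + τ * z) ^ (t/τ) :=
      one_add_mul_self_le_rpow_one_add (by nlinarith) (by
        rw [le_div_iff₀ hτ]; linarith)
    linarith
  have hfinal : z ^ β * (t - τ) ^ β ≤ (1 + τ * z) ^ (t/τ) := by
    rw [← Real.mul_rpow hz.le hs.le]; exact hkey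
  have hB : (0:ℝ) < (1 + τ * z) ^ (t/τ) := Real.rpow_pos_of_pos h1 _
  have hD : (0:ℝ) < (t - τ) ^ β := Real.rpow_pos_of_pos hs _
  rw [hexp, one_mul, Real.rpow_neg hs.le, Real.rpow_neg h1.le]
  rw [mul_inv_le_iff₀' hB, ← div_eq_mul_inv, le_div_iff₀ hD]
  exact hfinal
end

section
/- Let Λ be positive self-adjoint with eigenvalues λ_j ≥ λ_1 > 0 and ∑_j λ_j^{-1} < ∞. For τ > 0 let B_τ be the self-adjoint operator with eigenvalues √(2+λ_j τ)/(√2 (1+λ_j τ)). Then for a cylindrical Gaussian Γ, E|(√(2τ) B_τ − Λ^{-1/2})Γ|² = ∑_j (√(τ(2+λ_j τ))/(1+λ_j τ) − λ_j^{-1/2})² ≤ ∑_j 1/(λ_j (1+λ_j τ)^4), and this tends to 0 as τ → ∞. -/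
open Real Set Filter

lemma key_ineq (l τ : ℝ) (hl : 0 < l) (ht : 0 < τ) :
    (Real.sqrt (τ * (2 + l * τ)) / (1 + l * τ) - l ^ (-(1:ℝ)/2)) ^ 2
      ≤ 1 / (l * (1 + l * τ) ^ 4) := by
  have hd : 0 < 1 + l * τ := by positivity
  have hx : 0 ≤ τ * (2 + l * τ) := by positivity
  have hs2 : (Real.sqrt (τ * (2 + l * τ))) ^ 2 = τ * (2 + l * τ) := Real.sq_sqrt hx
  have hslpos : 0 < Real.sqrt l := Real.sqrt_pos.mpr hl
  have hsl : (Real.sqrt l) ^ 2 = l := Real.sq_sqrt hl.le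
  have hrl : l ^ (-(1:ℝ)/2) = (Real.sqrt l)⁻¹ := by
    rw [show (-(1:ℝ)/2) = -(1/2) by ring, Real.rpow_neg hl.le, ← Real.sqrt_eq_rpow]
  rw [hrl]
  set s := Real.sqrt (τ * (2 + l * τ)) with hsdef
  have hsnn : 0 ≤ s := Real.sqrt_nonneg _
  set a := s / (1 + l * τ) with hadef
  set b := (Real.sqrt l)⁻¹ with hbdef
  have ha : 0 ≤ a := by positivity
  have hb : 0 < b := by positivity
  have hb2 : b ^ 2 = 1 / l := by
    rw [hbdef, ← hsl]; field_simp; rw [Real.sqrt_sq hslpos.le]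
  have ha2 : a ^ 2 = τ * (2 + l * τ) / (1 + l * τ) ^ 2 := by
    rw [hadef, div_pow, hs2]
  have hdiff : b ^ 2 - a ^ 2 = 1 / (l * (1 + l * τ) ^ 2) := by
    rw [hb2, ha2]; field_simp; ring
  have hab : a ≤ b := by
    have hp2 : 0 < 1 / (l * (1 + l * τ) ^ 2) := by positivity
    have h1 : a ^ 2 ≤ b ^ 2 := by linarith
    nlinarith [sq_nonneg (a - b), sq_nonneg (a + b)]
  have hstep : b - a ≤ (b ^ 2 - a ^ 2) / b := by
    rw [le_div_iff₀ hb]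
    nlinarith [mul_nonneg ha (sub_nonneg.mpr hab)]
  have hfin : (b - a) ^ 2 ≤ ((b ^ 2 - a ^ 2) / b) ^ 2 := by
    have h0 : 0 ≤ b - a := sub_nonneg.mpr hab
    exact pow_le_pow_left₀ h0 hstep 2
  have hcalc : ((b ^ 2 - a ^ 2) / b) ^ 2 = 1 / (l * (1 + l * τ) ^ 4) := by
    rw [hdiff, div_pow, hbdef]
    rw [inv_pow, hsl]
    field_simp
  calc (a - b) ^ 2 = (b - a) ^ 2 := by ring
    _ ≤ ((b ^ 2 - a ^ 2) / b) ^ 2 := hfin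
    _ = 1 / (l * (1 + l * τ) ^ 4) := hcalc

/-- Noise-operator comparison for the modified Euler scheme: if
`λ_j ≥ λ_1 > 0` and `∑_j λ_j^{-1} < ∞`, then for every `τ > 0`,
`∑_j (√(τ(2+λ_j τ))/(1+λ_j τ) − λ_j^{-1/2})² ≤ ∑_j 1/(λ_j (1+λ_j τ)^4)`,
and this quantity tends to `0` as `τ → ∞`. -/
theorem stmt12 (lam : ℕ → ℝ) (hpos : ∀ j, 0 < lam j)
    (hlb : ∀ j, lam 0 ≤ lam j)
    (hsum : Summable (fun j => (lam j)⁻¹)) :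
    (∀ τ : ℝ, 0 < τ →
      (∑' j : ℕ, (Real.sqrt (τ * (2 + lam j * τ)) / (1 + lam j * τ)
          - (lam j) ^ (-(1:ℝ)/2)) ^ 2) ≤
        ∑' j : ℕ, 1 / (lam j * (1 + lam j * τ) ^ 4)) ∧
    Filter.Tendsto
      (fun τ : ℝ => ∑' j : ℕ, (Real.sqrt (τ * (2 + lam j * τ)) / (1 + lam j * τ)
          - (lam j) ^ (-(1:ℝ)/2)) ^ 2)
      Filter.atTop (nhds 0) := by
  set f : ℝ → ℕ → ℝ := fun τ j =>
    (Real.sqrt (τ * (2 + lam j * τ)) / (1 + lam j * τ) - (lam j) ^ (-(1:ℝ)/2)) ^ 2 with hfdef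
  set g : ℝ → ℕ → ℝ := fun τ j => 1 / (lam j * (1 + lam j * τ) ^ 4) with hgdef
  have hkey : ∀ τ : ℝ, 0 < τ → ∀ j, f τ j ≤ g τ j := fun τ hτ j =>
    key_ineq (lam j) τ (hpos j) hτ
  have hgsum : ∀ τ : ℝ, 0 < τ → Summable (g τ) := by
    intro τ hτ
    have hnn : ∀ j, 0 ≤ g τ j := by
      intro j
      have hd : (0:ℝ) < 1 + lam j * τ := by nlinarith [hpos j, mul_pos (hpos j) hτ]
      exact le_of_lt (div_pos one_pos (mul_pos (hpos j) (pow_pos hd 4)))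
    apply Summable.of_nonneg_of_le hnn _ hsum
    intro j
    have hd : (0:ℝ) < 1 + lam j * τ := by nlinarith [hpos j, mul_pos (hpos j) hτ]
    have h1 : (1:ℝ) ≤ (1 + lam j * τ) ^ 4 :=
      one_le_pow₀ (by nlinarith [mul_pos (hpos j) hτ])
    have : g τ j ≤ 1 / lam j :=
      one_div_le_one_div_of_le (hpos j) (le_mul_of_one_le_right (hpos j).le h1)
    simpa [one_div] using this
  have hfsum : ∀ τ : ℝ, 0 < τ → Summable (f τ) :=
    fun τ hτ => Summable.of_nonneg_of_le (fun j => sq_nonneg _) (hkey τ hτ) (hgsum τ hτ)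
  constructor
  · intro τ hτ
    exact Summable.tsum_le_tsum (hkey τ hτ) (hfsum τ hτ) (hgsum τ hτ)
  · -- squeeze
    have hC : (0:ℝ) ≤ ∑' j, (lam j)⁻¹ := tsum_nonneg (fun j => (inv_pos.mpr (hpos j)).le)
    have hbound : ∀ τ : ℝ, 0 < τ →
        (∑' j, f τ j) ≤ (∑' j, (lam j)⁻¹) * ((1 + lam 0 * τ) ^ 4)⁻¹ := by
      intro τ hτ
      have hd0 : (0:ℝ) < 1 + lam 0 * τ := by nlinarith [mul_pos (hpos 0) hτ]
      have hgle : ∀ j, g τ j ≤ (lam j)⁻¹ * ((1 + lam 0 * τ) ^ 4)⁻¹ := by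
        intro j
        have hdj : (0:ℝ) < 1 + lam j * τ := by nlinarith [mul_pos (hpos j) hτ]
        have hle : (1 + lam 0 * τ) ^ 4 ≤ (1 + lam j * τ) ^ 4 := by
          apply pow_le_pow_left₀ hd0.le
          nlinarith [hlb j]
        have h2 : lam j * (1 + lam 0 * τ) ^ 4 ≤ lam j * (1 + lam j * τ) ^ 4 :=
          mul_le_mul_of_nonneg_left hle (hpos j).le
        have h3 : g τ j ≤ 1 / (lam j * (1 + lam 0 * τ) ^ 4) :=
          one_div_le_one_div_of_le (mul_pos (hpos j) (pow_pos hd0 4)) h2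
        calc g τ j ≤ 1 / (lam j * (1 + lam 0 * τ) ^ 4) := h3
          _ = (lam j)⁻¹ * ((1 + lam 0 * τ) ^ 4)⁻¹ := by rw [one_div, mul_inv]
      have hsum2 : Summable (fun j => (lam j)⁻¹ * ((1 + lam 0 * τ) ^ 4)⁻¹) :=
        hsum.mul_right _
      calc (∑' j, f τ j) ≤ ∑' j, g τ j := Summable.tsum_le_tsum (hkey τ hτ) (hfsum τ hτ) (hgsum τ hτ)
        _ ≤ ∑' j, (lam j)⁻¹ * ((1 + lam 0 * τ) ^ 4)⁻¹ :=
            Summable.tsum_le_tsum hgle (hgsum τ hτ) hsum2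
        _ = (∑' j, (lam j)⁻¹) * ((1 + lam 0 * τ) ^ 4)⁻¹ := tsum_mul_right
    have hlin : Tendsto (fun τ : ℝ => 1 + lam 0 * τ) atTop atTop :=
      tendsto_atTop_add_const_left atTop 1
        (Tendsto.const_mul_atTop (hpos 0) tendsto_id)
    have htop : Tendsto (fun τ : ℝ => (1 + lam 0 * τ) ^ 4) atTop atTop :=
      (tendsto_pow_atTop (by norm_num : (4:ℕ) ≠ 0)).comp hlin
    have hinv : Tendsto (fun τ : ℝ => ((1 + lam 0 * τ) ^ 4)⁻¹) atTop (nhds 0) :=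
      tendsto_inv_atTop_zero.comp htop
    have hub : Tendsto (fun τ : ℝ => (∑' j, (lam j)⁻¹) * ((1 + lam 0 * τ) ^ 4)⁻¹)
        atTop (nhds 0) := by
      simpa using hinv.const_mul (∑' j, (lam j)⁻¹)
    apply squeeze_zero' _ _ hub
    · filter_upwards [eventually_gt_atTop (0:ℝ)] with τ hτ
      exact tsum_nonneg (fun j => sq_nonneg _)
    · filter_upwards [eventually_gt_atTop (0:ℝ)] with τ hτ
      exact hbound τ hτ
end
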